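/- Let $y_1,\dots,y_d > 0$ and $\beta > 1$. Then $\left(\sum_{j=1}^d y_j^{1-\beta}\right)^{1/\beta} \to \max_j (1/y_j)$ as $\beta \to \infty$. Consequently the combined fairness-efficiency value $-\left(\sum_j y_j^{1-\beta}\right)^{1/\beta}$ converges to $-\max_j(1/y_j) = -1/\min_j y_j$ as $\beta \to \infty$. -/

import Mathlib

/-!
Writing `y ^ (1 - β) = y * (1 / y) ^ β`, the expression is a weighted `β`-power mean of the
ratios `1 / y j` with the positive weights `y j`. If `M` is the largest ratio, the weighted sum lies
between `y m * M ^ β` and `(∑ j, y j) * M ^ β`, so its `β`-th root lies between `y m ^ (1/β) * M`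
and `(∑ j, y j) ^ (1/β) * M`; both bounds tend to `M` because `c ^ (1/β) → 1` for every `c > 0`.
-/

open Real Finset Filter Topology

lemma Real.tendsto_rpow_one_div_atTop_nhds_one {c : ℝ} (hc : 0 < c) :
    Tendsto (fun β : ℝ => c ^ (1 / β)) atTop (𝓝 1) := by
  have h := (continuousAt_const_rpow hc.ne').tendsto.comp tendsto_inv_atTop_zero
  simpa [Function.comp_def, one_div] using h

lemma Real.mul_rpow_rpow_one_div {c M β : ℝ} (hc : 0 ≤ c) (hM : 0 ≤ M) (hβ : β ≠ 0) :
    (c * M ^ β) ^ (1 / β) = c ^ (1 / β) * M := by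
  rw [mul_rpow hc (rpow_nonneg hM _), one_div, rpow_rpow_inv hM hβ]

theorem Finset.tendsto_sum_mul_rpow_rpow_one_div_atTop {ι : Type*} {s : Finset ι}
    (hs : s.Nonempty) {w a : ι → ℝ} (hw : ∀ j ∈ s, 0 < w j) (ha : ∀ j ∈ s, 0 ≤ a j) :
    Tendsto (fun β : ℝ => (∑ j ∈ s, w j * a j ^ β) ^ (1 / β)) atTop (𝓝 (s.sup' hs a)) := by
  obtain ⟨m, hm, hMm⟩ := exists_mem_eq_sup' hs a
  set M := s.sup' hs a
  have hM : 0 ≤ M := hMm ▸ ha m hm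
  have hW : 0 < ∑ j ∈ s, w j := sum_pos hw hs
  have hterm : ∀ β : ℝ, ∀ j ∈ s, 0 ≤ w j * a j ^ β := fun β j hj =>
    mul_nonneg (hw j hj).le (rpow_nonneg (ha j hj) _)
  have hlower : ∀ᶠ β : ℝ in atTop, w m ^ (1 / β) * M ≤ (∑ j ∈ s, w j * a j ^ β) ^ (1 / β) := by
    filter_upwards [eventually_gt_atTop 0] with β hβ
    rw [← mul_rpow_rpow_one_div (hw m hm).le hM hβ.ne', hMm]
    exact rpow_le_rpow (hterm β m hm) (single_le_sum (hterm β) hm) (one_div_pos.mpr hβ).le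
  have hupper : ∀ᶠ β : ℝ in atTop,
      (∑ j ∈ s, w j * a j ^ β) ^ (1 / β) ≤ (∑ j ∈ s, w j) ^ (1 / β) * M := by
    filter_upwards [eventually_gt_atTop 0] with β hβ
    rw [← mul_rpow_rpow_one_div hW.le hM hβ.ne', sum_mul]
    have hle : ∀ j ∈ s, w j * a j ^ β ≤ w j * M ^ β := fun j hj =>
      mul_le_mul_of_nonneg_left (rpow_le_rpow (ha j hj) (le_sup' a hj) hβ.le) (hw j hj).le
    exact rpow_le_rpow (sum_nonneg (hterm β)) (sum_le_sum hle) (one_div_pos.mpr hβ).le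
  have hlim : ∀ c > 0, Tendsto (fun β : ℝ => c ^ (1 / β) * M) atTop (𝓝 M) := fun c hc => by
    simpa using (tendsto_rpow_one_div_atTop_nhds_one hc).mul_const M
  exact tendsto_of_tendsto_of_tendsto_of_le_of_le' (hlim _ (hw m hm)) (hlim _ hW) hlower hupper

lemma Finset.sup'_one_div_eq_one_div_inf' {ι : Type*} {s : Finset ι} (hs : s.Nonempty)
    {y : ι → ℝ} (hy : ∀ j ∈ s, 0 < y j) :
    s.sup' hs (fun j => 1 / y j) = 1 / s.inf' hs y := by
  obtain ⟨k, hk, hmin⟩ := exists_mem_eq_inf' hs y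
  refine le_antisymm (sup'_le _ _ fun j hj => ?_) (hmin ▸ le_sup' (fun j => 1 / y j) hk)
  exact one_div_le_one_div_of_le (hmin ▸ hy k hk) (inf'_le y hj)

lemma Real.rpow_one_sub_eq_mul_one_div_rpow {y : ℝ} (hy : 0 < y) (β : ℝ) :
    y ^ (1 - β) = y * (1 / y) ^ β := by
  rw [rpow_sub hy, rpow_one, one_div, inv_rpow hy.le, div_eq_mul_inv]

/-- Max-ratio limit: for fixed positive `y`, `(∑ j, y j ^ (1-β))^(1/β) → max_j (1/y j)`
as `β → ∞`, and the combined value `-(∑ j, y j ^ (1-β))^(1/β)` tends to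
`-max_j (1/y j) = -1/min_j y j`. -/
theorem stmt_3 {d : ℕ} [NeZero d] (y : Fin d → ℝ) (hy : ∀ j, 0 < y j) :
    Tendsto (fun β : ℝ => (∑ j, y j ^ (1 - β)) ^ (1 / β)) atTop
      (𝓝 (Finset.univ.sup' Finset.univ_nonempty (fun j => 1 / y j))) ∧
    Tendsto (fun β : ℝ => -((∑ j, y j ^ (1 - β)) ^ (1 / β))) atTop
      (𝓝 (-(1 / Finset.univ.inf' Finset.univ_nonempty y))) ∧
    Finset.univ.sup' Finset.univ_nonempty (fun j => 1 / y j) =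
      1 / Finset.univ.inf' Finset.univ_nonempty y := by
  have hlim : Tendsto (fun β : ℝ => (∑ j, y j ^ (1 - β)) ^ (1 / β)) atTop
      (𝓝 (Finset.univ.sup' Finset.univ_nonempty (fun j => 1 / y j))) := by
    simp_rw [rpow_one_sub_eq_mul_one_div_rpow (hy _)]
    exact tendsto_sum_mul_rpow_rpow_one_div_atTop univ_nonempty (fun j _ => hy j)
      (fun j _ => (one_div_pos.mpr (hy j)).le)
  have heq := sup'_one_div_eq_one_div_inf' univ_nonempty (fun j _ => hy j)
  exact ⟨hlim, heq ▸ hlim.neg, heq⟩
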